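/- arXiv:math/0605572 — 6 statements merged into one kernel-verified Lean document; each statement's English description precedes it below -/
import Mathlib

section
/- The space of regulated functions with the sup-of-one-sided-limits norm is a Banach algebra: with ‖g‖ = sup_{t∈I} max{|g(t+)|, |g(t−)|}, the set of (equivalence classes of) regulated functions on I forms a complete normed algebra satisfying ‖fg‖ ≤ ‖f‖·‖g‖. -/
open Filter Set Topology

/-- A function is regulated on `(a,b)`: bounded with one-sided limits at every
interior point and at the endpoints. -/
def Regulated (a b : ℝ) (g : ℝ → ℝ) : Prop :=
  (∃ C, ∀ t ∈ Set.Ioo a b, |g t| ≤ C) ∧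
  (∀ t ∈ Set.Ico a b, ∃ L : ℝ, Tendsto g (𝓝[Set.Ioo t b] t) (𝓝 L)) ∧
  (∀ t ∈ Set.Ioc a b, ∃ L : ℝ, Tendsto g (𝓝[Set.Ioo a t] t) (𝓝 L))

/-- The norm `‖g‖ = sup_{t ∈ (a,b)} max {|g(t+)|, |g(t-)|}` on regulated functions
(one-sided limits of equivalent regulated functions agree, so this is a norm on
equivalence classes). -/
noncomputable def regNorm (a b : ℝ) (g : ℝ → ℝ) : ℝ :=
  ⨆ t ∈ Set.Ioo a b,
    max |limUnder (𝓝[Set.Ioo t b] t) g| |limUnder (𝓝[Set.Ioo a t] t) g|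

/-!
Sums and products act continuously on one-sided limits, so closure under the algebra operations
and `‖fg‖ ≤ ‖f‖‖g‖` are pointwise statements about limits.

For completeness, the key observation is that the right-limit function `s ↦ g(s+)` has right
limit `g(t+)` and left limit `g(t-)` at every `t`. Hence `‖g‖` bounds `|g(t+)|` and `|g(t-)|` also
at the endpoints, and for a Cauchy sequence `F k` the functions `F k (·+)` and `F k (·-)` converge
uniformly on `[a,b)` and `(a,b]` to some `f` and `l`. By the Moore–Osgood theorem `f` has
right limits `f(t+) = f(t)` and left limits `f(t-) = l(t)`, so `f` is regulated and `F k → f`.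
-/

open Function

theorem IsOpen.tendsto_of_eventually_tendsto {X Y : Type*} [TopologicalSpace X]
    [TopologicalSpace Y] [RegularSpace Y] {S : Set X} (hS : IsOpen S) {m : X → Filter X}
    (hm : ∀ y, m y ≤ 𝓝 y) {g φ : X → Y} {x : X} {L : Y} (hg : Tendsto g (𝓝[S] x) (𝓝 L))
    (hφ : ∀ᶠ y in 𝓝[S] x, (m y).NeBot ∧ Tendsto g (m y) (𝓝 (φ y))) :
    Tendsto φ (𝓝[S] x) (𝓝 L) := by
  refine (closed_nhds_basis L).tendsto_right_iff.2 fun B ⟨hB, hBc⟩ => ?_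
  filter_upwards [eventually_eventually_nhdsWithin.2 (hg hB), hφ, self_mem_nhdsWithin]
    with y hgB ⟨_, hy⟩ hyS
  rw [hS.nhdsWithin_eq hyS] at hgB
  exact hBc.mem_of_tendsto hy (hm y hgB)

theorem UniformCauchySeqOn.tendstoUniformlyOn_limUnder {α β : Type*} [UniformSpace β]
    [CompleteSpace β] [Nonempty β] {F : ℕ → α → β} {s : Set α}
    (hF : UniformCauchySeqOn F atTop s) :
    TendstoUniformlyOn F (fun x => limUnder atTop fun n => F n x) atTop s :=
  hF.tendstoUniformlyOn_of_tendsto fun _ hx => (hF.cauchySeq hx).tendsto_limUnder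

theorem TendstoUniformlyOn.tendsto_of_eventually_tendsto {ι α β : Type*} [UniformSpace β]
    {F : ι → α → β} {f : α → β} {p : Filter ι} [p.NeBot] {p' : Filter α} {s : Set α}
    {L : ι → β} {ℓ : β} (h1 : TendstoUniformlyOn F f p s) (hs : s ∈ p')
    (h2 : ∀ᶠ i in p, Tendsto (F i) p' (𝓝 (L i))) (h3 : Tendsto L p (𝓝 ℓ)) :
    Tendsto f p' (𝓝 ℓ) :=
  ((tendstoUniformlyOn_iff_tendstoUniformlyOnFilter.1 h1).mono_right
    (le_principal_iff.2 hs)).tendsto_of_eventually_tendsto h2 h3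

-- `g(t+)` and `g(t-)` as they enter `regNorm`; junk values where the limit does not exist.
noncomputable def rightLimOn (b : ℝ) (g : ℝ → ℝ) (t : ℝ) : ℝ := limUnder (𝓝[Ioo t b] t) g

noncomputable def leftLimOn (a : ℝ) (g : ℝ → ℝ) (t : ℝ) : ℝ := limUnder (𝓝[Ioo a t] t) g

section regNorm

variable {a b C : ℝ} {g : ℝ → ℝ}

theorem regNorm_nonneg : 0 ≤ regNorm a b g :=
  Real.iSup_nonneg fun _ => Real.iSup_nonneg fun _ => (abs_nonneg _).trans (le_max_left _ _)

theorem regNorm_le (hC : 0 ≤ C)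
    (h : ∀ t ∈ Ioo a b, max |rightLimOn b g t| |leftLimOn a g t| ≤ C) : regNorm a b g ≤ C :=
  Real.iSup_le (fun t => Real.iSup_le (h t) hC) hC

theorem rightLimOn_eq_of_tendsto {t L : ℝ} (ht : t < b) (h : Tendsto g (𝓝[Ioo t b] t) (𝓝 L)) :
    rightLimOn b g t = L :=
  have := left_nhdsWithin_Ioo_neBot ht
  h.limUnder_eq

theorem leftLimOn_eq_of_tendsto {t L : ℝ} (ht : a < t) (h : Tendsto g (𝓝[Ioo a t] t) (𝓝 L)) :
    leftLimOn a g t = L :=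
  have := right_nhdsWithin_Ioo_neBot ht
  h.limUnder_eq

end regNorm

namespace Regulated

variable {a b t C : ℝ} {f g : ℝ → ℝ}

theorem tendsto_rightLimOn (hg : Regulated a b g) (ht : t ∈ Ico a b) :
    Tendsto g (𝓝[Ioo t b] t) (𝓝 (rightLimOn b g t)) := by
  obtain ⟨L, hL⟩ := hg.2.1 t ht
  rwa [rightLimOn_eq_of_tendsto ht.2 hL]

theorem tendsto_leftLimOn (hg : Regulated a b g) (ht : t ∈ Ioc a b) :
    Tendsto g (𝓝[Ioo a t] t) (𝓝 (leftLimOn a g t)) := by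
  obtain ⟨L, hL⟩ := hg.2.2 t ht
  rwa [leftLimOn_eq_of_tendsto ht.1 hL]

theorem comp₂ {φ : ℝ → ℝ → ℝ} (hφ : Continuous (uncurry φ)) (hf : Regulated a b f)
    (hg : Regulated a b g) : Regulated a b fun s => φ (f s) (g s) := by
  obtain ⟨C, hC⟩ := hf.1
  obtain ⟨D, hD⟩ := hg.1
  obtain ⟨E, hE⟩ := (isCompact_Icc.prod isCompact_Icc).exists_bound_of_continuousOn
    (s := Icc (-C) C ×ˢ Icc (-D) D) hφ.continuousOn
  refine ⟨⟨E, fun s hs => hE (f s, g s) ⟨abs_le.1 (hC s hs), abs_le.1 (hD s hs)⟩⟩,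
    fun t ht => ?_, fun t ht => ?_⟩
  · exact ⟨_, (hφ.tendsto _).comp ((hf.tendsto_rightLimOn ht).prodMk_nhds
      (hg.tendsto_rightLimOn ht))⟩
  · exact ⟨_, (hφ.tendsto _).comp ((hf.tendsto_leftLimOn ht).prodMk_nhds
      (hg.tendsto_leftLimOn ht))⟩

theorem rightLimOn_comp₂ {φ : ℝ → ℝ → ℝ} (hφ : Continuous (uncurry φ)) (hf : Regulated a b f)
    (hg : Regulated a b g) (ht : t ∈ Ico a b) :
    rightLimOn b (fun s => φ (f s) (g s)) t = φ (rightLimOn b f t) (rightLimOn b g t) :=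
  rightLimOn_eq_of_tendsto ht.2 <| (hφ.tendsto _).comp
    ((hf.tendsto_rightLimOn ht).prodMk_nhds (hg.tendsto_rightLimOn ht))

theorem leftLimOn_comp₂ {φ : ℝ → ℝ → ℝ} (hφ : Continuous (uncurry φ)) (hf : Regulated a b f)
    (hg : Regulated a b g) (ht : t ∈ Ioc a b) :
    leftLimOn a (fun s => φ (f s) (g s)) t = φ (leftLimOn a f t) (leftLimOn a g t) :=
  leftLimOn_eq_of_tendsto ht.1 <| (hφ.tendsto _).comp
    ((hf.tendsto_leftLimOn ht).prodMk_nhds (hg.tendsto_leftLimOn ht))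

theorem add (hf : Regulated a b f) (hg : Regulated a b g) : Regulated a b (f + g) :=
  hf.comp₂ (φ := (· + ·)) continuous_add hg

theorem sub (hf : Regulated a b f) (hg : Regulated a b g) : Regulated a b (f - g) :=
  hf.comp₂ (φ := (· - ·)) continuous_sub hg

theorem mul (hf : Regulated a b f) (hg : Regulated a b g) : Regulated a b (f * g) :=
  hf.comp₂ (φ := (· * ·)) continuous_mul hg

theorem rightLimOn_sub (hf : Regulated a b f) (hg : Regulated a b g) (ht : t ∈ Ico a b) :
    rightLimOn b (f - g) t = rightLimOn b f t - rightLimOn b g t :=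
  hf.rightLimOn_comp₂ (φ := (· - ·)) continuous_sub hg ht

theorem leftLimOn_sub (hf : Regulated a b f) (hg : Regulated a b g) (ht : t ∈ Ioc a b) :
    leftLimOn a (f - g) t = leftLimOn a f t - leftLimOn a g t :=
  hf.leftLimOn_comp₂ (φ := (· - ·)) continuous_sub hg ht

theorem rightLimOn_mul (hf : Regulated a b f) (hg : Regulated a b g) (ht : t ∈ Ico a b) :
    rightLimOn b (f * g) t = rightLimOn b f t * rightLimOn b g t :=
  hf.rightLimOn_comp₂ (φ := (· * ·)) continuous_mul hg ht

theorem leftLimOn_mul (hf : Regulated a b f) (hg : Regulated a b g) (ht : t ∈ Ioc a b) :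
    leftLimOn a (f * g) t = leftLimOn a f t * leftLimOn a g t :=
  hf.leftLimOn_comp₂ (φ := (· * ·)) continuous_mul hg ht

theorem abs_rightLimOn_le (hg : Regulated a b g) (hC : ∀ s ∈ Ioo a b, |g s| ≤ C)
    (ht : t ∈ Ico a b) : |rightLimOn b g t| ≤ C :=
  have := left_nhdsWithin_Ioo_neBot ht.2
  le_of_tendsto (hg.tendsto_rightLimOn ht).abs <|
    eventually_nhdsWithin_of_forall fun s hs => hC s ⟨ht.1.trans_lt hs.1, hs.2⟩

theorem abs_leftLimOn_le (hg : Regulated a b g) (hC : ∀ s ∈ Ioo a b, |g s| ≤ C)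
    (ht : t ∈ Ioc a b) : |leftLimOn a g t| ≤ C :=
  have := right_nhdsWithin_Ioo_neBot ht.1
  le_of_tendsto (hg.tendsto_leftLimOn ht).abs <|
    eventually_nhdsWithin_of_forall fun s hs => hC s ⟨hs.1, hs.2.trans_le ht.2⟩

theorem le_regNorm (hg : Regulated a b g) (ht : t ∈ Ioo a b) :
    max |rightLimOn b g t| |leftLimOn a g t| ≤ regNorm a b g := by
  obtain ⟨C, hC⟩ := hg.1
  have hbdd : BddAbove (range fun s =>
      ⨆ _ : s ∈ Ioo a b, max |rightLimOn b g s| |leftLimOn a g s|) :=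
    ⟨max C 0, forall_mem_range.2 fun s => Real.iSup_le (fun hs => le_max_of_le_left <|
      max_le (hg.abs_rightLimOn_le hC ⟨hs.1.le, hs.2⟩) (hg.abs_leftLimOn_le hC ⟨hs.1, hs.2.le⟩))
      (le_max_right _ _)⟩
  calc max |rightLimOn b g t| |leftLimOn a g t|
      = ⨆ _ : t ∈ Ioo a b, max |rightLimOn b g t| |leftLimOn a g t| := by rw [ciSup_pos ht]
    _ ≤ regNorm a b g := le_ciSup hbdd t

theorem regNorm_mul_le (hf : Regulated a b f) (hg : Regulated a b g) :
    regNorm a b (f * g) ≤ regNorm a b f * regNorm a b g := by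
  refine regNorm_le (mul_nonneg regNorm_nonneg regNorm_nonneg) fun t ht => ?_
  rw [hf.rightLimOn_mul hg ⟨ht.1.le, ht.2⟩, hf.leftLimOn_mul hg ⟨ht.1, ht.2.le⟩, abs_mul, abs_mul]
  obtain ⟨hfr, hfl⟩ := max_le_iff.1 (hf.le_regNorm ht)
  obtain ⟨hgr, hgl⟩ := max_le_iff.1 (hg.le_regNorm ht)
  exact max_le (mul_le_mul hfr hgr (abs_nonneg _) regNorm_nonneg)
    (mul_le_mul hfl hgl (abs_nonneg _) regNorm_nonneg)

theorem tendsto_rightLimOn_of_tendsto (hg : Regulated a b g) {S : Set ℝ} (hS : IsOpen S)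
    (hSab : S ⊆ Ico a b) {x L : ℝ} (h : Tendsto g (𝓝[S] x) (𝓝 L)) :
    Tendsto (rightLimOn b g) (𝓝[S] x) (𝓝 L) :=
  hS.tendsto_of_eventually_tendsto (fun _ => nhdsWithin_le_nhds) h <|
    eventually_nhdsWithin_of_forall fun _ hy =>
      ⟨left_nhdsWithin_Ioo_neBot (hSab hy).2, hg.tendsto_rightLimOn (hSab hy)⟩

theorem tendsto_rightLimOn_nhdsWithin_Ioo_right (hg : Regulated a b g) (ht : t ∈ Ico a b) :
    Tendsto (rightLimOn b g) (𝓝[Ioo t b] t) (𝓝 (rightLimOn b g t)) :=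
  hg.tendsto_rightLimOn_of_tendsto isOpen_Ioo (fun _ hs => ⟨ht.1.trans hs.1.le, hs.2⟩)
    (hg.tendsto_rightLimOn ht)

theorem tendsto_rightLimOn_nhdsWithin_Ioo_left (hg : Regulated a b g) (ht : t ∈ Ioc a b) :
    Tendsto (rightLimOn b g) (𝓝[Ioo a t] t) (𝓝 (leftLimOn a g t)) :=
  hg.tendsto_rightLimOn_of_tendsto isOpen_Ioo (fun _ hs => ⟨hs.1.le, hs.2.trans_le ht.2⟩)
    (hg.tendsto_leftLimOn ht)

theorem abs_le_regNorm_of_tendsto (hg : Regulated a b g) {S : Set ℝ} (hS : S ⊆ Ioo a b)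
    {x L : ℝ} [(𝓝[S] x).NeBot] (h : Tendsto (rightLimOn b g) (𝓝[S] x) (𝓝 L)) :
    |L| ≤ regNorm a b g :=
  le_of_tendsto h.abs <| eventually_nhdsWithin_of_forall fun _ hs =>
    (le_max_left _ _).trans (hg.le_regNorm (hS hs))

theorem abs_rightLimOn_le_regNorm (hg : Regulated a b g) (ht : t ∈ Ico a b) :
    |rightLimOn b g t| ≤ regNorm a b g :=
  have := left_nhdsWithin_Ioo_neBot ht.2
  hg.abs_le_regNorm_of_tendsto (fun _ hs => ⟨ht.1.trans_lt hs.1, hs.2⟩)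
    (hg.tendsto_rightLimOn_nhdsWithin_Ioo_right ht)

theorem abs_leftLimOn_le_regNorm (hg : Regulated a b g) (ht : t ∈ Ioc a b) :
    |leftLimOn a g t| ≤ regNorm a b g :=
  have := right_nhdsWithin_Ioo_neBot ht.1
  hg.abs_le_regNorm_of_tendsto (fun _ hs => ⟨hs.1, hs.2.trans_le ht.2⟩)
    (hg.tendsto_rightLimOn_nhdsWithin_Ioo_left ht)

end Regulated

section Completeness

variable {a b : ℝ} {F : ℕ → ℝ → ℝ} {f l : ℝ → ℝ}

theorem uniformCauchySeqOn_rightLimOn (hF : ∀ k, Regulated a b (F k))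
    (hC : ∀ ε > (0:ℝ), ∃ N, ∀ m ≥ N, ∀ n ≥ N, regNorm a b (F m - F n) ≤ ε) :
    UniformCauchySeqOn (fun k => rightLimOn b (F k)) atTop (Ico a b) := by
  refine Metric.uniformCauchySeqOn_iff.2 fun ε hε => ?_
  obtain ⟨N, hN⟩ := hC (ε / 2) (half_pos hε)
  refine ⟨N, fun m hm n hn s hs => ?_⟩
  rw [Real.dist_eq, ← (hF m).rightLimOn_sub (hF n) hs]
  exact ((((hF m).sub (hF n)).abs_rightLimOn_le_regNorm hs).trans (hN m hm n hn)).trans_lt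
    (half_lt_self hε)

theorem uniformCauchySeqOn_leftLimOn (hF : ∀ k, Regulated a b (F k))
    (hC : ∀ ε > (0:ℝ), ∃ N, ∀ m ≥ N, ∀ n ≥ N, regNorm a b (F m - F n) ≤ ε) :
    UniformCauchySeqOn (fun k => leftLimOn a (F k)) atTop (Ioc a b) := by
  refine Metric.uniformCauchySeqOn_iff.2 fun ε hε => ?_
  obtain ⟨N, hN⟩ := hC (ε / 2) (half_pos hε)
  refine ⟨N, fun m hm n hn s hs => ?_⟩
  rw [Real.dist_eq, ← (hF m).leftLimOn_sub (hF n) hs]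
  exact ((((hF m).sub (hF n)).abs_leftLimOn_le_regNorm hs).trans (hN m hm n hn)).trans_lt
    (half_lt_self hε)

theorem tendsto_nhdsWithin_Ioo_right_of_tendstoUniformlyOn (hF : ∀ k, Regulated a b (F k))
    (hf : TendstoUniformlyOn (fun k => rightLimOn b (F k)) f atTop (Ico a b)) {t : ℝ}
    (ht : t ∈ Ico a b) : Tendsto f (𝓝[Ioo t b] t) (𝓝 (f t)) :=
  hf.tendsto_of_eventually_tendsto
    (mem_of_superset self_mem_nhdsWithin fun _ hs => ⟨ht.1.trans hs.1.le, hs.2⟩)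
    (Eventually.of_forall fun k => (hF k).tendsto_rightLimOn_nhdsWithin_Ioo_right ht)
    (hf.tendsto_at ht)

theorem tendsto_nhdsWithin_Ioo_left_of_tendstoUniformlyOn (hF : ∀ k, Regulated a b (F k))
    (hf : TendstoUniformlyOn (fun k => rightLimOn b (F k)) f atTop (Ico a b))
    (hl : TendstoUniformlyOn (fun k => leftLimOn a (F k)) l atTop (Ioc a b)) {t : ℝ}
    (ht : t ∈ Ioc a b) : Tendsto f (𝓝[Ioo a t] t) (𝓝 (l t)) :=
  hf.tendsto_of_eventually_tendsto
    (mem_of_superset self_mem_nhdsWithin fun _ hs => ⟨hs.1.le, hs.2.trans_le ht.2⟩)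
    (Eventually.of_forall fun k => (hF k).tendsto_rightLimOn_nhdsWithin_Ioo_left ht)
    (hl.tendsto_at ht)

theorem regulated_of_tendstoUniformlyOn (hF : ∀ k, Regulated a b (F k))
    (hf : TendstoUniformlyOn (fun k => rightLimOn b (F k)) f atTop (Ico a b))
    (hl : TendstoUniformlyOn (fun k => leftLimOn a (F k)) l atTop (Ioc a b)) :
    Regulated a b f := by
  refine ⟨?_, fun t ht => ⟨_, tendsto_nhdsWithin_Ioo_right_of_tendstoUniformlyOn hF hf ht⟩,
    fun t ht => ⟨_, tendsto_nhdsWithin_Ioo_left_of_tendstoUniformlyOn hF hf hl ht⟩⟩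
  obtain ⟨N, hN⟩ := (Metric.tendstoUniformlyOn_iff.1 hf 1 one_pos).exists
  refine ⟨regNorm a b (F N) + 1, fun s hs => ?_⟩
  have hFN := (hF N).abs_rightLimOn_le_regNorm (Ioo_subset_Ico_self hs)
  have hfFN := hN s (Ioo_subset_Ico_self hs)
  rw [Real.dist_eq] at hfFN
  linarith [abs_sub_abs_le_abs_sub (f s) (rightLimOn b (F N) s)]

theorem regNorm_sub_le_of_tendstoUniformlyOn (hF : ∀ k, Regulated a b (F k))
    (hf : TendstoUniformlyOn (fun k => rightLimOn b (F k)) f atTop (Ico a b))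
    (hl : TendstoUniformlyOn (fun k => leftLimOn a (F k)) l atTop (Ioc a b))
    {ε : ℝ} (hε : 0 < ε) : ∀ᶠ k in atTop, regNorm a b (F k - f) ≤ ε := by
  have hfreg := regulated_of_tendstoUniformlyOn hF hf hl
  filter_upwards [Metric.tendstoUniformlyOn_iff.1 hf ε hε,
    Metric.tendstoUniformlyOn_iff.1 hl ε hε] with k hkf hkl
  refine regNorm_le hε.le fun t ht => ?_
  have hft := tendsto_nhdsWithin_Ioo_right_of_tendstoUniformlyOn hF hf (Ioo_subset_Ico_self ht)
  have hlt := tendsto_nhdsWithin_Ioo_left_of_tendstoUniformlyOn hF hf hl (Ioo_subset_Ioc_self ht)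
  rw [(hF k).rightLimOn_sub hfreg (Ioo_subset_Ico_self ht), rightLimOn_eq_of_tendsto ht.2 hft,
    (hF k).leftLimOn_sub hfreg (Ioo_subset_Ioc_self ht), leftLimOn_eq_of_tendsto ht.1 hlt,
    abs_sub_comm, ← Real.dist_eq, abs_sub_comm, ← Real.dist_eq]
  exact max_le (hkf t (Ioo_subset_Ico_self ht)).le (hkl t (Ioo_subset_Ioc_self ht)).le

theorem exists_regulated_tendsto_regNorm_sub (hF : ∀ k, Regulated a b (F k))
    (hC : ∀ ε > (0:ℝ), ∃ N, ∀ m ≥ N, ∀ n ≥ N, regNorm a b (F m - F n) ≤ ε) :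
    ∃ f : ℝ → ℝ, Regulated a b f ∧ Tendsto (fun k => regNorm a b (F k - f)) atTop (𝓝 0) := by
  have hf := (uniformCauchySeqOn_rightLimOn hF hC).tendstoUniformlyOn_limUnder
  have hl := (uniformCauchySeqOn_leftLimOn hF hC).tendstoUniformlyOn_limUnder
  refine ⟨_, regulated_of_tendstoUniformlyOn hF hf hl, Metric.tendsto_nhds.2 fun ε hε => ?_⟩
  filter_upwards [regNorm_sub_le_of_tendstoUniformlyOn hF hf hl (half_pos hε)] with k hk
  rw [Real.dist_eq, sub_zero, abs_of_nonneg regNorm_nonneg]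
  exact hk.trans_lt (half_lt_self hε)

end Completeness

theorem stmt2_general (a b : ℝ) :
    (∀ f g : ℝ → ℝ, Regulated a b f → Regulated a b g →
      Regulated a b (f + g) ∧ Regulated a b (f * g)) ∧
    (∀ f g : ℝ → ℝ, Regulated a b f → Regulated a b g →
      regNorm a b (f * g) ≤ regNorm a b f * regNorm a b g) ∧
    (∀ F : ℕ → ℝ → ℝ, (∀ k, Regulated a b (F k)) →
      (∀ ε > (0:ℝ), ∃ N, ∀ m ≥ N, ∀ n ≥ N, regNorm a b (F m - F n) ≤ ε) →
      ∃ f : ℝ → ℝ, Regulated a b f ∧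
        Tendsto (fun k => regNorm a b (F k - f)) atTop (𝓝 0)) := by
  exact ⟨fun f g hf hg => ⟨hf.add hg, hf.mul hg⟩, fun f g hf hg => hf.regNorm_mul_le hg,
    fun F hF hC => exists_regulated_tendsto_regNorm_sub hF hC⟩

/-- The regulated functions on `(a,b)` with the sup-of-one-sided-limits norm form a
Banach algebra: they are closed under sum and product, the norm is submultiplicative,
and every Cauchy sequence converges (in the `regNorm` pseudometric, i.e. up to
the identification of functions with the same one-sided limits). -/
theorem stmt2 (a b : ℝ) (hab : a < b) :
    (∀ f g : ℝ → ℝ, Regulated a b f → Regulated a b g →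
      Regulated a b (f + g) ∧ Regulated a b (f * g)) ∧
    (∀ f g : ℝ → ℝ, Regulated a b f → Regulated a b g →
      regNorm a b (f * g) ≤ regNorm a b f * regNorm a b g) ∧
    (∀ F : ℕ → ℝ → ℝ, (∀ k, Regulated a b (F k)) →
      (∀ ε > (0:ℝ), ∃ N, ∀ m ≥ N, ∀ n ≥ N, regNorm a b (F m - F n) ≤ ε) →
      ∃ f : ℝ → ℝ, Regulated a b f ∧
        Tendsto (fun k => regNorm a b (F k - f)) atTop (𝓝 0)) :=
  stmt2_general a b
end

section
/- Nagumo viability theorem (sufficiency, single smooth constraint): Let η : ℝⁿ → ℝ be C¹ with ∇η(x) ≠ 0 whenever η(x) = 0, and let M = {x : η(x) ≤ 0} be nonempty. Let f : I × ℝⁿ → ℝⁿ be continuous in t and locally Lipschitz in x. If (∇η(x), f(t,x)) ≤ 0 for all t ∈ Ω = (t₀,T) and all x with η(x) = 0, then every solution x(·) of ẋ = f(t,x) with x(t₀) ∈ M remains in M for all t ∈ Ω (on its interval of existence). -/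
open Filter Set Topology RealInnerProductSpace Metric Asymptotics
open scoped NNReal

/-! Let `d t` be the distance from `x t` to `M = {η ≤ 0}`. While `x t ∉ M`, a nearest point `z`
of `M` lies on `{η = 0}`; since `∇η z ≠ 0`, the sublevel set is metrically regular near `z`, so
the tangency condition keeps `z + h • f t z` within `o(h)` of `M`, and the Lipschitz bound
`‖f t (x t) - f t z‖ ≤ K d t` yields the Dini estimate `D⁺d ≤ K d`. Starting from the last time
the solution was in `M`, Grönwall's inequality forces `d = 0`. -/

section

variable {E : Type*} [NormedAddCommGroup E] [NormedSpace ℝ E]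

theorem HasStrictFDerivAt.exists_infDist_sublevel_le {η : E → ℝ} {L : E →L[ℝ] ℝ} {z : E}
    (hη : HasStrictFDerivAt η L z) (hL : L ≠ 0) (hz : η z = 0) :
    ∃ C > 0, ∀ᶠ y in 𝓝 z, infDist y {x | η x ≤ 0} ≤ C * max (η y) 0 := by
  obtain ⟨u, hu⟩ : ∃ u, L u ≠ 0 := by
    by_contra! h
    exact hL (ContinuousLinearMap.ext h)
  set v := (L u)⁻¹ • u
  have hLv : L v = 1 := by simp [v, hu]
  have hv : 0 < ‖v‖ := norm_pos_iff.2 fun h => by simp [h] at hLv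
  refine ⟨2 * ‖v‖, by positivity, ?_⟩
  have hpair : Tendsto (fun y => (y - (2 * η y) • v, y)) (𝓝 z) (𝓝 (z, z)) := by
    have hηz := hη.continuousAt
    have hcont : ContinuousAt (fun y => (y - (2 * η y) • v, y)) z := by fun_prop
    simpa [ContinuousAt, hz] using hcont.tendsto
  filter_upwards [hpair.eventually (hη.isLittleO.def (c := (2 * ‖v‖)⁻¹) (by positivity))]
    with y hy
  rcases le_or_gt (η y) 0 with hy0 | hy0
  · rw [infDist_zero_of_mem (show y ∈ {x | η x ≤ 0} from hy0)]
    positivity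
  -- strict differentiability controls `η` along `y - h • v` uniformly for `y` near `z`
  have hmem : η (y - (2 * η y) • v) ≤ 0 := by
    simp only [sub_sub_cancel_left, map_neg, map_smul, hLv, smul_eq_mul, mul_one, norm_neg,
      norm_smul, Real.norm_eq_abs, _root_.abs_of_pos (by positivity : 0 < 2 * η y)] at hy
    have hη_half : (2 * ‖v‖)⁻¹ * (2 * η y * ‖v‖) = η y := by field_simp
    linarith [(le_abs_self _).trans hy]
  calc infDist y {x | η x ≤ 0} ≤ dist y (y - (2 * η y) • v) := infDist_le_dist_of_mem hmem
    _ = 2 * ‖v‖ * max (η y) 0 := by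
      rw [max_eq_left hy0.le, dist_eq_norm, sub_sub_cancel, norm_smul, Real.norm_eq_abs,
        _root_.abs_of_pos (by positivity)]
      ring

theorem HasStrictFDerivAt.infDist_sublevel_add_smul_isLittleO {η : E → ℝ} {L : E →L[ℝ] ℝ}
    {z w : E} (hη : HasStrictFDerivAt η L z) (hL : L ≠ 0) (hz : η z = 0) (hw : L w ≤ 0) :
    (fun h : ℝ => infDist (z + h • w) {x | η x ≤ 0}) =o[𝓝[>] 0] id := by
  obtain ⟨C, hC, hreg⟩ := hη.exists_infDist_sublevel_le hL hz
  have hline : HasDerivAt (fun h : ℝ => η (z + h • w)) (L w) 0 := by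
    have h1 : HasDerivAt (fun h : ℝ => z + h • w) w 0 := by
      simpa using ((hasDerivAt_id (0 : ℝ)).smul_const w).const_add z
    exact hη.hasFDerivAt.comp_hasDerivAt_of_eq 0 h1 (by simp)
  have hnear : Tendsto (fun h : ℝ => z + h • w) (𝓝[>] 0) (𝓝 z) := by
    have : Continuous fun h : ℝ => z + h • w := by fun_prop
    simpa using (this.tendsto 0).mono_left nhdsWithin_le_nhds
  refine IsLittleO.of_bound fun c hc => ?_
  filter_upwards [hnear.eventually hreg,
    (hline.isLittleO.def (div_pos hc hC)).filter_mono nhdsWithin_le_nhds,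
    self_mem_nhdsWithin] with h hreg_h hline_h (hpos : 0 < h)
  simp only [zero_smul, add_zero, hz, sub_zero, smul_eq_mul, Real.norm_eq_abs,
    _root_.abs_of_pos hpos] at hline_h
  have hηh : max (η (z + h • w)) 0 ≤ c / C * h := by
    have hη_le := (le_abs_self _).trans hline_h
    have hLw : h * L w ≤ 0 := mul_nonpos_of_nonneg_of_nonpos hpos.le hw
    exact max_le (by linarith) (by positivity)
  rw [Real.norm_eq_abs, abs_of_nonneg infDist_nonneg, id, Real.norm_eq_abs, _root_.abs_of_pos hpos]
  calc infDist (z + h • w) {x | η x ≤ 0} ≤ C * max (η (z + h • w)) 0 := hreg_h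
    _ ≤ C * (c / C * h) := by gcongr
    _ = c * h := by field_simp

theorem mem_frontier_of_infDist_eq_dist {s : Set E} {y z : E} (hy : y ∉ s) (hz : z ∈ s)
    (hd : infDist y s = dist y z) : z ∈ frontier s := by
  refine ⟨subset_closure hz, fun hint => ?_⟩
  have hyz : 0 < dist y z := dist_pos.2 fun h => hy (h ▸ hz)
  have hnear : Tendsto (AffineMap.lineMap z y) (𝓝[>] (0 : ℝ)) (𝓝 z) := by
    simpa using (AffineMap.lineMap_continuous.tendsto (0 : ℝ)).mono_left nhdsWithin_le_nhds
  obtain ⟨θ, hθs, hθ0, hθ1⟩ := ((hnear.eventually (mem_interior_iff_mem_nhds.1 hint)).and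
    (Ioo_mem_nhdsGT one_pos)).exists
  -- points of `s` on the segment from `z` towards `y` are closer to `y` than `z` is
  have := hd ▸ infDist_le_dist_of_mem hθs
  rw [dist_comm y (AffineMap.lineMap z y θ), dist_lineMap_right, Real.norm_eq_abs,
    abs_of_pos (by linarith), dist_comm z] at this
  nlinarith

theorem HasDerivAt.eventually_slope_infDist_lt {s : Set E} {x : ℝ → E} {v w z : E} {t r : ℝ}
    (hx : HasDerivAt x v t) (hz : infDist (x t) s = dist (x t) z)
    (hw : (fun h : ℝ => infDist (z + h • w) s) =o[𝓝[>] 0] id) (hr : ‖v - w‖ < r) :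
    ∀ᶠ u in 𝓝[>] t, (u - t)⁻¹ * (infDist (x u) s - infDist (x t) s) < r := by
  set ζ := (r - ‖v - w‖) / 3
  have hζ : 0 < ζ := by simp only [ζ]; linarith
  have hshift : Tendsto (fun u => u - t) (𝓝[>] t) (𝓝[>] 0) := by
    refine tendsto_nhdsWithin_of_tendsto_nhds_of_eventually_within _ ?_ ?_
    · simpa using ((continuous_sub_right t).tendsto t).mono_left nhdsWithin_le_nhds
    · filter_upwards [self_mem_nhdsWithin] with u (hu : t < u)
      exact sub_pos.2 hu
  filter_upwards [(hx.isLittleO.def hζ).filter_mono nhdsWithin_le_nhds,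
    hshift.eventually (hw.def hζ), self_mem_nhdsWithin] with u hxu hwu (hu : t < u)
  have hpos : 0 < u - t := sub_pos.2 hu
  simp only [Real.norm_eq_abs, abs_of_pos hpos, abs_of_nonneg infDist_nonneg, id] at hxu hwu
  -- `x u` is compared with `z + (u - t) • w`, which is within `o(u - t)` of `s`
  have hdist : dist (x u) (z + (u - t) • w) ≤
      ζ * (u - t) + infDist (x t) s + (u - t) * ‖v - w‖ := by
    have hsplit : x u - (z + (u - t) • w) =
        (x u - x t - (u - t) • v) + (x t - z) + (u - t) • (v - w) := by
      rw [smul_sub]; abel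
    rw [dist_eq_norm, hsplit, hz, dist_eq_norm]
    refine (norm_add₃_le ..).trans (add_le_add (add_le_add hxu le_rfl) ?_)
    rw [norm_smul, Real.norm_eq_abs, abs_of_pos hpos]
  have := (infDist_le_infDist_add_dist (x := x u) (y := z + (u - t) • w) (s := s)).trans
    (add_le_add hwu hdist)
  rw [inv_mul_lt_iff₀ hpos]
  simp only [ζ] at this
  nlinarith

theorem eventually_slope_infDist_sublevel_lt [ProperSpace E] {η : E → ℝ} (hη : ContDiff ℝ 1 η)
    (hreg : ∀ y, η y = 0 → fderiv ℝ η y ≠ 0) {F : E → E} {K : ℝ≥0} {p : E} {ε : ℝ}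
    (hF : LipschitzOnWith K F (ball p ε)) (htan : ∀ y, η y = 0 → fderiv ℝ η y (F y) ≤ 0)
    (hp : η p ≤ 0) {x : ℝ → E} {t r : ℝ} (hx : HasDerivAt x (F (x t)) t) (hxt : 0 < η (x t))
    (hxp : dist (x t) p < ε / 2) (hr : K * infDist (x t) {y | η y ≤ 0} < r) :
    ∀ᶠ u in 𝓝[>] t,
      (u - t)⁻¹ * (infDist (x u) {y | η y ≤ 0} - infDist (x t) {y | η y ≤ 0}) < r := by
  have hM : IsClosed {y | η y ≤ 0} := isClosed_le hη.continuous continuous_const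
  obtain ⟨z, hzM, hz⟩ := hM.exists_infDist_eq_dist ⟨p, hp⟩ (x t)
  have hz0 : η z = 0 := frontier_le_subset_eq hη.continuous continuous_const
    (mem_frontier_of_infDist_eq_dist hxt.not_ge hzM hz)
  have hxz : dist (x t) z ≤ dist (x t) p := hz ▸ infDist_le_dist_of_mem hp
  have hzp : dist z p < ε := by linarith [dist_triangle_left z p (x t)]
  have hLip : ‖F (x t) - F z‖ ≤ K * infDist (x t) {y | η y ≤ 0} := by
    rw [hz, ← dist_eq_norm]
    exact hF.dist_le_mul _ (mem_ball.2 (by linarith [dist_nonneg (x := x t) (y := p)])) _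
      (mem_ball.2 hzp)
  exact hx.eventually_slope_infDist_lt hz
    ((hη.hasStrictFDerivAt one_ne_zero).infDist_sublevel_add_smul_isLittleO (hreg z hz0) hz0
      (htan z hz0)) (hLip.trans_lt hr)

end

theorem le_zero_of_liminf_deriv_right_le_mul {d : ℝ → ℝ} {K a b : ℝ} (hab : a < b)
    (hd : ContinuousOn d (Icc a b)) (ha : d a = 0)
    (hbound : ∀ t ∈ Ioo a b, ∀ r, K * d t < r → ∃ᶠ u in 𝓝[>] t, (u - t)⁻¹ * (d u - d t) < r) :
    d b ≤ 0 := by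
  have hgronwall : ∀ a' ∈ Ioo a b, d b ≤ d a' * Real.exp (K * (b - a')) := fun a' ha' => by
    have := le_gronwallBound_of_liminf_deriv_right_le (hd.mono (Icc_subset_Icc ha'.1.le le_rfl))
      (fun t ht => hbound t ⟨ha'.1.trans_le ht.1, ht.2⟩) le_rfl (fun t _ => (add_zero _).ge)
      b ⟨ha'.2.le, le_rfl⟩
    rwa [gronwallBound_ε0] at this
  have hlim : Tendsto (fun a' => d a' * Real.exp (K * (b - a'))) (𝓝[>] a) (𝓝 0) := by
    have hda : Tendsto d (𝓝[>] a) (𝓝 0) :=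
      ha ▸ ((hd a (left_mem_Icc.2 hab.le)).mono_of_mem_nhdsWithin (Icc_mem_nhdsGT hab))
    have hexp : Continuous fun a' => Real.exp (K * (b - a')) := by fun_prop
    simpa using hda.mul ((hexp.tendsto a).mono_left nhdsWithin_le_nhds)
  exact ge_of_tendsto hlim (eventually_of_mem (Ioo_mem_nhdsGT hab) hgronwall)

theorem ContinuousAt.exists_forall_Icc_dist_lt {α : Type*} [PseudoMetricSpace α] {x : ℝ → α}
    {s t ε : ℝ} (hx : ContinuousAt x s) (hε : 0 < ε) (hst : s < t) :
    ∃ b, s < b ∧ b ≤ t ∧ ∀ u ∈ Icc s b, dist (x u) (x s) < ε := by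
  have hnear : ∀ᶠ u in 𝓝[≥] s, dist (x u) (x s) < ε :=
    (hx.eventually (ball_mem_nhds _ hε)).filter_mono nhdsWithin_le_nhds
  obtain ⟨u, hsu, hu⟩ := mem_nhdsGE_iff_exists_Icc_subset.1 hnear
  exact ⟨min u t, lt_min hsu hst, min_le_right _ _,
    fun v hv => hu ⟨hv.1, hv.2.trans (min_le_left _ _)⟩⟩

theorem stmt6_general {n : ℕ} (η : EuclideanSpace ℝ (Fin n) → ℝ) (hη : ContDiff ℝ 1 η)
    (hgrad : ∀ x, η x = 0 → gradient η x ≠ 0)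
    (t₀ T : ℝ)
    (f : ℝ → EuclideanSpace ℝ (Fin n) → EuclideanSpace ℝ (Fin n))
    (hfx : ∀ p : EuclideanSpace ℝ (Fin n), ∃ K : NNReal, ∃ ε > (0:ℝ),
      ∀ t ∈ Set.Ioo t₀ T, LipschitzOnWith K (f t) (Metric.ball p ε))
    (htan : ∀ t ∈ Set.Ioo t₀ T, ∀ x, η x = 0 → ⟪gradient η x, f t x⟫ ≤ 0)
    (x : ℝ → EuclideanSpace ℝ (Fin n))
    (hx : ∀ t ∈ Set.Ico t₀ T, HasDerivAt x (f t (x t)) t)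
    (hx0 : η (x t₀) ≤ 0) :
    ∀ t ∈ Set.Ioo t₀ T, η (x t) ≤ 0 := by
  set M := {y : EuclideanSpace ℝ (Fin n) | η y ≤ 0}
  have hM : IsClosed M := isClosed_le hη.continuous continuous_const
  have hinner : ∀ y w, ⟪gradient η y, w⟫ = fderiv ℝ η y w := fun _ _ =>
    InnerProductSpace.toDual_symm_apply
  have hreg : ∀ y, η y = 0 → fderiv ℝ η y ≠ 0 := fun y hy h => hgrad y hy (by simp [gradient, h])
  intro t₁ ht₁
  by_contra! hout
  set d := fun u => infDist (x u) M
  have hd : ContinuousOn d (Icc t₀ t₁) := (continuous_infDist_pt M).comp_continuousOn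
    fun u hu => (hx u ⟨hu.1, hu.2.trans_lt ht₁.2⟩).continuousAt.continuousWithinAt
  obtain ⟨s, ⟨hs, hds⟩, hlast⟩ : ∃ s, IsGreatest {u ∈ Icc t₀ t₁ | d u = 0} s :=
    (isCompact_Icc.of_isClosed_subset (hd.preimage_isClosed_of_isClosed isClosed_Icc
      isClosed_singleton) inter_subset_left).exists_isGreatest
        ⟨t₀, ⟨le_rfl, ht₁.1.le⟩, infDist_zero_of_mem hx0⟩
  have hsM : x s ∈ M := (hM.mem_iff_infDist_zero ⟨_, hx0⟩).2 hds
  have hst₁ : s < t₁ := hs.2.lt_of_ne fun h => (h ▸ hout).not_ge hsM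
  obtain ⟨K, ε, hε, hLip⟩ := hfx (x s)
  obtain ⟨b, hsb, hbt₁, hball⟩ := (hx s ⟨hs.1, hst₁.trans ht₁.2⟩).continuousAt
    |>.exists_forall_Icc_dist_lt (half_pos hε) hst₁
  have hdb : d b ≤ 0 := le_zero_of_liminf_deriv_right_le_mul hsb
    (hd.mono (Icc_subset_Icc hs.1 hbt₁)) hds fun t ht r hr => by
      have htI : t ∈ Ioo t₀ T := ⟨hs.1.trans_lt ht.1, ht.2.trans_le hbt₁ |>.trans ht₁.2⟩
      have hxt : 0 < η (x t) := by
        by_contra! h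
        exact ht.1.not_ge (hlast ⟨⟨htI.1.le, ht.2.le.trans hbt₁⟩, infDist_zero_of_mem h⟩)
      exact (eventually_slope_infDist_sublevel_lt hη hreg (hLip t htI)
        (fun y hy => hinner y _ ▸ htan t htI y hy) hsM (hx t ⟨htI.1.le, htI.2⟩) hxt
        (hball t ⟨ht.1.le, ht.2.le⟩) hr).frequently
  exact hsb.not_ge (hlast ⟨⟨hs.1.trans hsb.le, hbt₁⟩, le_antisymm hdb infDist_nonneg⟩)

/-- Nagumo viability theorem (sufficiency, single smooth constraint):
if `η` is `C¹` with `∇η(x) ≠ 0` on `{η = 0}`, `M = {η ≤ 0}` is nonempty,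
`f` is continuous in `t` and locally Lipschitz in `x`, and
`(∇η(x), f(t,x)) ≤ 0` for all `t ∈ (t₀,T)` and `x` with `η(x) = 0`,
then any solution of `ẋ = f(t,x)` starting in `M` at `t₀` remains in `M` on `(t₀,T)`. -/
theorem stmt6 {n : ℕ} (η : EuclideanSpace ℝ (Fin n) → ℝ) (hη : ContDiff ℝ 1 η)
    (hgrad : ∀ x, η x = 0 → gradient η x ≠ 0)
    (hne : {x : EuclideanSpace ℝ (Fin n) | η x ≤ 0}.Nonempty)
    (t₀ T : ℝ)
    (f : ℝ → EuclideanSpace ℝ (Fin n) → EuclideanSpace ℝ (Fin n))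
    (hft : ∀ x, Continuous fun t => f t x)
    (hfx : ∀ p : EuclideanSpace ℝ (Fin n), ∃ K : NNReal, ∃ ε > (0:ℝ),
      ∀ t ∈ Set.Ioo t₀ T, LipschitzOnWith K (f t) (Metric.ball p ε))
    (htan : ∀ t ∈ Set.Ioo t₀ T, ∀ x, η x = 0 → ⟪gradient η x, f t x⟫ ≤ 0)
    (x : ℝ → EuclideanSpace ℝ (Fin n))
    (hx : ∀ t ∈ Set.Ico t₀ T, HasDerivAt x (f t (x t)) t)
    (hx0 : η (x t₀) ≤ 0) :
    ∀ t ∈ Set.Ioo t₀ T, η (x t) ≤ 0 :=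
  stmt6_general η hη hgrad t₀ T f hfx htan x hx hx0
end

section
/- Uniform stability criterion via nested balls: let f, g : D → ℝ be Lipschitz, x* ∈ D with f(x*) = 0, and suppose the solution of ẋ = f(x) + g(x)w(t) (w continuous) satisfies (x − x*, f(x) + g(x)w(t)) ≤ 0 for all t and all x with |x − x*|₂ = 1/l, for every l ∈ ℕ. Then for each l, the closed ball M_l = {x : |x − x*|₂ ≤ 1/l} is forward invariant: any solution with x(t₀) ∈ M_l satisfies x(t) ∈ M_l for all t ≥ t₀ in its interval of existence. -/
open Set Topology RealInnerProductSpace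

/-!
Outside the ball of radius `r` about `x*`, compare the vector field at `y` with its value at the
radial projection `z` of `y` onto the sphere: the sphere condition kills `⟪y - x*, F z⟫`, and the
Lipschitz bound gives `⟪y - x*, F y⟫ ≤ L |y - x*| (|y - x*| - r) ≤ L (|y - x*|² - r²)`. Hence
`u = |x(t) - x*|² - r²` satisfies `u' ≤ 2L u` wherever `u ≥ 0`, and comparing `u` with the barriers
`ε e^{M (s - t)}` (`M > |2L|`) shows that `u` stays nonpositive.
-/

theorem image_nonpos_of_deriv_right_le_mul_of_nonneg {u u' : ℝ → ℝ} {a b K : ℝ}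
    (hu : ContinuousOn u (Icc a b)) (hu' : ∀ s ∈ Ico a b, HasDerivWithinAt u (u' s) (Ici s) s)
    (hbound : ∀ s ∈ Ico a b, 0 ≤ u s → u' s ≤ K * u s) (ha : u a ≤ 0) :
    ∀ t ∈ Icc a b, u t ≤ 0 := by
  intro t ht
  refine le_of_forall_pos_le_add fun ε hε => ?_
  set M := |K| + 1
  set B : ℝ → ℝ := fun s => ε * Real.exp (M * (s - t))
  have hB : ∀ s, HasDerivAt B (M * B s) s := fun s => by
    refine ((((hasDerivAt_id' s).sub_const t).const_mul M).exp.const_mul ε).congr_deriv ?_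
    simp only [B]; ring
  have hBpos : ∀ s, 0 < B s := fun s => by positivity
  have hcross : ∀ s ∈ Ico a b, u s = B s → u' s < M * B s := fun s hs hs' => calc
    u' s ≤ K * u s := hbound s hs (hs' ▸ (hBpos s).le)
    _ = K * B s := by rw [hs']
    _ ≤ |K| * B s := mul_le_mul_of_nonneg_right (le_abs_self K) (hBpos s).le
    _ < M * B s := mul_lt_mul_of_pos_right (lt_add_one _) (hBpos s)
  have := image_le_of_deriv_right_lt_deriv_boundary hu hu' (ha.trans (hBpos a).le) hB hcross ht
  simpa [B] using this

theorem LipschitzWith.inner_sub_le_of_inner_sphere_nonpos {E : Type*} [NormedAddCommGroup E]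
    [InnerProductSpace ℝ E] {G : E → E} {K : NNReal} (hG : LipschitzWith K G) {c : E} {r : ℝ}
    (hr : 0 < r) (hsphere : ∀ z, ‖z - c‖ = r → ⟪z - c, G z⟫ ≤ 0) {y : E} (hy : r ≤ ‖y - c‖) :
    ⟪y - c, G y⟫ ≤ K * (‖y - c‖ ^ 2 - r ^ 2) := by
  set φ := ‖y - c‖
  have hφ : 0 < φ := hr.trans_le hy
  set z := c + (r / φ) • (y - c)
  have hzc : z - c = (r / φ) • (y - c) := add_sub_cancel_left c _
  have hz : ‖z - c‖ = r := by
    rw [hzc, norm_smul, Real.norm_of_nonneg (by positivity), div_mul_cancel₀ _ hφ.ne']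
  have hyz : ‖y - z‖ = φ - r := by
    have : y - z = (1 - r / φ) • (y - c) := by simp only [z, sub_smul, one_smul]; abel
    rw [this, norm_smul, Real.norm_of_nonneg (by rw [sub_nonneg, div_le_one hφ]; exact hy)]
    rw [sub_mul, one_mul, div_mul_cancel₀ _ hφ.ne']
  have hradial : ⟪y - c, G z⟫ ≤ 0 := by
    have h := hsphere z hz
    rw [hzc, real_inner_smul_left] at h
    exact nonpos_of_mul_nonpos_right h (by positivity)
  have hlip : ⟪y - c, G y - G z⟫ ≤ φ * (K * (φ - r)) := by
    refine (real_inner_le_norm _ _).trans (mul_le_mul_of_nonneg_left ?_ hφ.le)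
    rw [← hyz, ← dist_eq_norm, ← dist_eq_norm]
    exact hG.dist_le_mul y z
  calc ⟪y - c, G y⟫ = ⟪y - c, G z⟫ + ⟪y - c, G y - G z⟫ := by
        rw [← inner_add_right, add_sub_cancel]
    _ ≤ φ * (K * (φ - r)) := by linarith
    _ ≤ K * (φ ^ 2 - r ^ 2) := by
        have : φ * (φ - r) ≤ φ ^ 2 - r ^ 2 := by nlinarith
        nlinarith [K.coe_nonneg]

theorem norm_sub_le_of_inner_deriv_right_le {E : Type*} [NormedAddCommGroup E]
    [InnerProductSpace ℝ E] {x x' : ℝ → E} {a b r L : ℝ} {c : E}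
    (hx : ContinuousOn x (Icc a b)) (hx' : ∀ s ∈ Ico a b, HasDerivWithinAt x (x' s) (Ici s) s)
    (hbound : ∀ s ∈ Ico a b, r ≤ ‖x s - c‖ → ⟪x s - c, x' s⟫ ≤ L * (‖x s - c‖ ^ 2 - r ^ 2))
    (ha : ‖x a - c‖ ≤ r) : ∀ t ∈ Icc a b, ‖x t - c‖ ≤ r := by
  have hr : 0 ≤ r := (norm_nonneg _).trans ha
  have hsq : ∀ s, 0 ≤ ‖x s - c‖ ^ 2 - r ^ 2 ↔ r ≤ ‖x s - c‖ := fun s => by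
    rw [sub_nonneg, pow_le_pow_iff_left₀ hr (norm_nonneg _) two_ne_zero]
  have hu := image_nonpos_of_deriv_right_le_mul_of_nonneg (K := 2 * L)
    (u := fun s => ‖x s - c‖ ^ 2 - r ^ 2)
    ((hx.sub continuousOn_const).norm.pow 2 |>.sub continuousOn_const)
    (fun s hs => ((hx' s hs).sub_const c).norm_sq.sub_const (r ^ 2))
    (fun s hs hu => by linarith [hbound s hs ((hsq s).1 hu)])
    (by simp only [sub_nonpos]; gcongr)
  exact fun t ht => (pow_le_pow_iff_left₀ (norm_nonneg _) hr two_ne_zero).1 (sub_nonpos.1 (hu t ht))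

theorem hasDerivWithinAt_Ici_of_eq_add_integral {E : Type*} [NormedAddCommGroup E]
    [NormedSpace ℝ E] [CompleteSpace E] {x F : ℝ → E} {a b : ℝ} (hF : ContinuousOn F (Ico a b))
    (hx : ∀ t ∈ Ico a b, x t = x a + ∫ r in a..t, F r) :
    ∀ s ∈ Ico a b, HasDerivWithinAt x (F s) (Ici s) s := by
  intro s hs
  have hnhds : Ico a b ∈ 𝓝[≥] s :=
    Filter.mem_of_superset (Ico_mem_nhdsGE hs.2) (Ico_subset_Ico_left hs.1)
  have hnhds' : Ico a b ∈ 𝓝[>] s := nhdsWithin_mono s Ioi_subset_Ici_self hnhds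
  have hint : IntervalIntegrable F MeasureTheory.volume a s := by
    refine (hF.mono ?_).intervalIntegrable
    rw [uIcc_of_le hs.1]
    exact Icc_subset_Ico_right hs.2
  have hderiv := (intervalIntegral.integral_hasDerivWithinAt_right (s := Ici s) hint
    ⟨Ico a b, hnhds', hF.aestronglyMeasurable measurableSet_Ico⟩
    ((hF s hs).mono_of_mem_nhdsWithin hnhds')).const_add (x a)
  exact hderiv.congr_of_eventuallyEq (Filter.eventually_of_mem hnhds hx) (hx s hs)

theorem stmt13_general {n : ℕ}
    (f g : EuclideanSpace ℝ (Fin n) → EuclideanSpace ℝ (Fin n))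
    (Kf Kg : NNReal) (hf : LipschitzWith Kf f) (hg : LipschitzWith Kg g)
    (w : ℝ → ℝ) (hw : Continuous w)
    (xs : EuclideanSpace ℝ (Fin n))
    (hcond : ∀ l : ℕ, 0 < l → ∀ t : ℝ, ∀ x : EuclideanSpace ℝ (Fin n),
      ‖x - xs‖ = 1/(l:ℝ) → ⟪x - xs, f x + w t • g x⟫ ≤ 0) :
    ∀ l : ℕ, 0 < l → ∀ t₀ T : ℝ, ∀ x : ℝ → EuclideanSpace ℝ (Fin n),
      ContinuousOn x (Set.Ico t₀ T) →
      (∀ t ∈ Set.Ico t₀ T,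
        x t = x t₀ + ∫ r in t₀..t, (f (x r) + w r • g (x r))) →
      ‖x t₀ - xs‖ ≤ 1/(l:ℝ) →
      ∀ t ∈ Set.Ico t₀ T, ‖x t - xs‖ ≤ 1/(l:ℝ) := by
  intro l hl t₀ T x hxc hint h0 t ht
  have hr : 0 < 1 / (l : ℝ) := by positivity
  obtain ⟨C, hC⟩ := (isCompact_Icc (a := t₀) (b := t)).exists_bound_of_continuousOn hw.continuousOn
  have hF : ContinuousOn (fun s => f (x s) + w s • g (x s)) (Ico t₀ T) :=
    (hf.continuous.comp_continuousOn hxc).add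
      (hw.continuousOn.smul (hg.continuous.comp_continuousOn hxc))
  have hsub : Icc t₀ t ⊆ Ico t₀ T := Icc_subset_Ico_right ht.2
  refine norm_sub_le_of_inner_deriv_right_le (L := Kf + C * Kg) (hxc.mono hsub)
    (fun s hs => hasDerivWithinAt_Ici_of_eq_add_integral hF hint s (hsub (Ico_subset_Icc_self hs)))
    (fun s hs hrs => ?_) h0 t (right_mem_Icc.2 ht.1)
  have hG : LipschitzWith (Kf + ‖w s‖₊ * Kg) (fun z => f z + w s • g z) :=
    hf.add ((lipschitzWith_smul (w s)).comp hg)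
  have hgap : 0 ≤ ‖x s - xs‖ ^ 2 - (1 / (l : ℝ)) ^ 2 := sub_nonneg.2 (by gcongr)
  calc _ ≤ ((Kf + ‖w s‖₊ * Kg : NNReal) : ℝ) * (‖x s - xs‖ ^ 2 - (1 / (l : ℝ)) ^ 2) :=
        hG.inner_sub_le_of_inner_sphere_nonpos hr (hcond l hl s) hrs
    _ ≤ _ := by
        push_cast
        gcongr
        exact hC s (Ico_subset_Icc_self hs)

/-- Uniform stability criterion via nested balls: for `ẋ = f(x) + g(x)w(t)` with
`f, g` Lipschitz, `w` continuous, `f(x*) = 0`, if `(x - x*, f(x) + g(x)w(t)) ≤ 0`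
whenever `|x - x*|₂ = 1/l` (for every `l ∈ ℕ`, `l > 0`), then each closed ball
`M_l = {x : |x - x*|₂ ≤ 1/l}` is forward invariant for solutions of the system. -/
theorem stmt13 {n : ℕ}
    (f g : EuclideanSpace ℝ (Fin n) → EuclideanSpace ℝ (Fin n))
    (Kf Kg : NNReal) (hf : LipschitzWith Kf f) (hg : LipschitzWith Kg g)
    (w : ℝ → ℝ) (hw : Continuous w)
    (xs : EuclideanSpace ℝ (Fin n)) (heq : f xs = 0)
    (hcond : ∀ l : ℕ, 0 < l → ∀ t : ℝ, ∀ x : EuclideanSpace ℝ (Fin n),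
      ‖x - xs‖ = 1/(l:ℝ) → ⟪x - xs, f x + w t • g x⟫ ≤ 0) :
    ∀ l : ℕ, 0 < l → ∀ t₀ T : ℝ, ∀ x : ℝ → EuclideanSpace ℝ (Fin n),
      ContinuousOn x (Set.Ico t₀ T) →
      (∀ t ∈ Set.Ico t₀ T,
        x t = x t₀ + ∫ r in t₀..t, (f (x r) + w r • g (x r))) →
      ‖x t₀ - xs‖ ≤ 1/(l:ℝ) →
      ∀ t ∈ Set.Ico t₀ T, ‖x t - xs‖ ≤ 1/(l:ℝ) :=
  stmt13_general f g Kf Kg hf hg w hw xs hcond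
end

section
/- Uniform stability of x* = 1/2 for the impulsive jump dynamics: for each impulse, if γ solves γ'(s) = (1/2 − γ(s))·c·α(s) on J with c ≥ 0, α ≥ 0 continuous, then |γ(s) − 1/2| is nonincreasing in s; in particular |γ(1/2) − 1/2| ≤ |γ(−1/2) − 1/2|, so every ball {x : |x − 1/2| ≤ 1/l} is invariant under the jump map. -/
open Set

theorem antitoneOn_sq_sub_of_hasDerivAt {f g : ℝ → ℝ} {x₀ : ℝ} {D : Set ℝ} (hD : Convex ℝ D)
    (hg : ∀ s ∈ D, 0 ≤ g s) (hf : ∀ s ∈ D, HasDerivAt f ((x₀ - f s) * g s) s) :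
    AntitoneOn (fun s => (f s - x₀) ^ 2) D := by
  have hderiv : ∀ s ∈ D,
      HasDerivAt (fun s => (f s - x₀) ^ 2) (-(2 * (f s - x₀) ^ 2 * g s)) s := fun s hs =>
    (((hf s hs).sub_const x₀).pow 2).congr_deriv (by ring)
  refine antitoneOn_of_deriv_nonpos hD
    (fun s hs => (hderiv s hs).continuousAt.continuousWithinAt)
    (fun s hs => (hderiv s (interior_subset hs)).differentiableAt.differentiableWithinAt)
    (fun s hs => ?_)
  rw [(hderiv s (interior_subset hs)).deriv, neg_nonpos]
  have := hg s (interior_subset hs)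
  positivity

theorem antitoneOn_abs_sub_of_hasDerivAt {f g : ℝ → ℝ} {x₀ : ℝ} {D : Set ℝ} (hD : Convex ℝ D)
    (hg : ∀ s ∈ D, 0 ≤ g s) (hf : ∀ s ∈ D, HasDerivAt f ((x₀ - f s) * g s) s) :
    AntitoneOn (fun s => |f s - x₀|) D := fun _ hs₁ _ hs₂ h =>
  sq_le_sq.mp (antitoneOn_sq_sub_of_hasDerivAt hD hg hf hs₁ hs₂ h)

theorem stmt15_general (c : ℝ) (hc : 0 ≤ c) (α : ℝ → ℝ)
    (hα0 : ∀ s ∈ Set.Icc (-(1:ℝ)/2) (1/2), 0 ≤ α s)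
    (γ : ℝ → ℝ)
    (hγ : ∀ s ∈ Set.Icc (-(1:ℝ)/2) (1/2),
      HasDerivAt γ ((1/2 - γ s) * (c * α s)) s) :
    (∀ s₁ ∈ Set.Icc (-(1:ℝ)/2) (1/2), ∀ s₂ ∈ Set.Icc (-(1:ℝ)/2) (1/2),
      s₁ ≤ s₂ → |γ s₂ - 1/2| ≤ |γ s₁ - 1/2|) ∧
    |γ (1/2) - 1/2| ≤ |γ (-(1:ℝ)/2) - 1/2| ∧
    (∀ l : ℕ, 0 < l → |γ (-(1:ℝ)/2) - 1/2| ≤ 1/(l:ℝ) →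
      |γ (1/2) - 1/2| ≤ 1/(l:ℝ)) := by
  have hanti : AntitoneOn (fun s => |γ s - 1/2|) (Icc (-(1:ℝ)/2) (1/2)) :=
    antitoneOn_abs_sub_of_hasDerivAt (convex_Icc _ _)
      (fun s hs => mul_nonneg hc (hα0 s hs)) hγ
  have hends : |γ (1/2) - 1/2| ≤ |γ (-(1:ℝ)/2) - 1/2| :=
    hanti (by norm_num) (by norm_num) (by norm_num)
  exact ⟨fun _ hs₁ _ hs₂ h => hanti hs₁ hs₂ h, hends, fun _ _ hl => hends.trans hl⟩

/-- Uniform stability of `x* = 1/2` for the impulsive jump dynamics: along any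
solution of `γ' = (1/2 - γ)·c·α(s)` on `J = [-1/2,1/2]` with `c ≥ 0` and `α ≥ 0`
continuous, `|γ(s) - 1/2|` is nonincreasing; in particular
`|γ(1/2) - 1/2| ≤ |γ(-1/2) - 1/2|`, so each ball `{x : |x - 1/2| ≤ 1/l}` is
invariant under the jump map. -/
theorem stmt15 (c : ℝ) (hc : 0 ≤ c) (α : ℝ → ℝ) (hαc : Continuous α)
    (hα0 : ∀ s ∈ Set.Icc (-(1:ℝ)/2) (1/2), 0 ≤ α s)
    (γ : ℝ → ℝ)
    (hγ : ∀ s ∈ Set.Icc (-(1:ℝ)/2) (1/2),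
      HasDerivAt γ ((1/2 - γ s) * (c * α s)) s) :
    (∀ s₁ ∈ Set.Icc (-(1:ℝ)/2) (1/2), ∀ s₂ ∈ Set.Icc (-(1:ℝ)/2) (1/2),
      s₁ ≤ s₂ → |γ s₂ - 1/2| ≤ |γ s₁ - 1/2|) ∧
    |γ (1/2) - 1/2| ≤ |γ (-(1:ℝ)/2) - 1/2| ∧
    (∀ l : ℕ, 0 < l → |γ (-(1:ℝ)/2) - 1/2| ≤ 1/(l:ℝ) →
      |γ (1/2) - 1/2| ≤ 1/(l:ℝ)) :=
  stmt15_general c hc α hα0 γ hγ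
end

section
/- Contraction estimate underlying local existence (Theorem 3): let f be Lipschitz in x with constant K_f, let û ∈ BV on I_h⁺ = (t₀, t₀+h) with continuous part u_c, and let ĝ be Lipschitz in x with constant K_g and bounded. Then for the operator P(x̂)(t) = x₀ + ∫_{t₀}^t f(r, x̂(r)) dr + ∫_{t₀}^t ĝ(r, x̂(r)) du_c(r) acting on curves x̂ : I_h⁺ → ℝⁿ, one has the Lipschitz estimate sup|P(x̂) − P(ŷ)| ≤ (K_f h + K_g var_{I_h⁺}(u_c)) · sup|x̂ − ŷ|; hence if K_f h + K_g var_{I_h⁺}(u_c) < 1, P has a unique fixed point among continuous curves (by the Banach fixed point theorem). -/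
/-!
Both integral terms of `P x - P y` are integrals of `f r (x r) - f r (y r)` (resp. of `g`), which
the Lipschitz conditions bound pointwise by `K_f C` (resp. `K_g C`); integrating against Lebesgue
measure on an interval of length at most `h`, and against the two measures `μ, ν` whose masses
add up to `V`, gives the contraction estimate. If the constant is `< 1`, the operator induced by
`P` on `C([t₀, t₀ + h], ℝⁿ)` (through the constant extension of curves outside the interval) is a
contraction of a complete space, and Banach's theorem provides the fixed point. The estimate with
`C = 0` also shows that `P x` depends on `x` only through its values on the interval, which
transfers uniqueness back to curves on `ℝ`.
-/

open MeasureTheory Set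

section FixedPoint

variable {E : Type*} [NormedAddCommGroup E]

def SupLipschitzOn (P : (ℝ → E) → ℝ → E) (s : Set ℝ) (k : ℝ) : Prop :=
  ∀ x y : ℝ → E, Continuous x → Continuous y → ∀ C : ℝ, (∀ r ∈ s, ‖x r - y r‖ ≤ C) →
    ∀ t ∈ s, ‖P x t - P y t‖ ≤ k * C

variable {P : (ℝ → E) → ℝ → E} {s : Set ℝ} {k : ℝ}

theorem SupLipschitzOn.eqOn {x y : ℝ → E} (hP : SupLipschitzOn P s k)
    (hx : Continuous x) (hy : Continuous y) (hxy : EqOn x y s) : EqOn (P x) (P y) s := by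
  intro t ht
  have h := hP x y hx hy 0 (fun r hr => by rw [hxy hr, sub_self, norm_zero]) t ht
  rw [mul_zero, norm_le_zero_iff] at h
  exact sub_eq_zero.mp h

theorem SupLipschitzOn.exists_unique_fixedPoint [CompleteSpace E] {a b : ℝ} (hab : a ≤ b)
    (hP : SupLipschitzOn P (Icc a b) k) (hk₀ : 0 ≤ k) (hk : k < 1)
    (hcont : ∀ y : ℝ → E, Continuous y → Continuous (P y)) :
    ∃ x : ℝ → E, Continuous x ∧ (∀ t ∈ Icc a b, P x t = x t) ∧
      ∀ y : ℝ → E, Continuous y → (∀ t ∈ Icc a b, P y t = y t) → ∀ t ∈ Icc a b, y t = x t := by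
  have hext (u : C(Icc a b, E)) : Continuous (IccExtend hab u) := u.continuous.Icc_extend'
  let Q : C(Icc a b, E) → C(Icc a b, E) := fun u =>
    ⟨fun p => P (IccExtend hab u) p, (hcont _ (hext u)).comp continuous_subtype_val⟩
  have hQ : ContractingWith ⟨k, hk₀⟩ Q := by
    refine ⟨by exact_mod_cast hk, LipschitzWith.of_dist_le_mul fun u v => ?_⟩
    refine (ContinuousMap.dist_le (by positivity)).mpr fun p => ?_
    rw [dist_eq_norm]
    refine hP _ _ (hext u) (hext v) _ (fun r hr => ?_) p p.2
    rw [IccExtend_of_mem hab u hr, IccExtend_of_mem hab v hr, ← dist_eq_norm]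
    exact ContinuousMap.dist_apply_le_dist _
  have : Nonempty (Icc a b) := ⟨⟨a, left_mem_Icc.mpr hab⟩⟩
  obtain ⟨u, hu, huniq⟩ : ∃ u, Q u = u ∧ ∀ v, Q v = v → v = u :=
    ⟨_, hQ.fixedPoint_isFixedPt, fun _ hv => hQ.fixedPoint_unique hv⟩
  refine ⟨IccExtend hab u, hext u, fun t ht => ?_, fun y hy hyfix t ht => ?_⟩
  · rw [IccExtend_of_mem hab u ht]
    exact DFunLike.congr_fun hu ⟨t, ht⟩
  · let v : C(Icc a b, E) := ⟨fun p => y p, hy.comp continuous_subtype_val⟩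
    have hvy : EqOn (IccExtend hab v) y (Icc a b) := fun r hr => IccExtend_of_mem hab v hr
    have hv : Q v = v := ContinuousMap.ext fun p =>
      (hP.eqOn (hext v) hy hvy p.2).trans (hyfix p p.2)
    rw [IccExtend_of_mem hab u ht, ← huniq v hv]
    rfl

end FixedPoint

section IntegralEstimates

variable {E F : Type*} [NormedAddCommGroup E] [NormedSpace ℝ E] [SeminormedAddCommGroup F]
  {f : ℝ → F → E} {K : NNReal} {x y : ℝ → F} {C : ℝ}

theorem LipschitzWith.norm_sub_le_mul_of_le {φ : F → E} (hφ : LipschitzWith K φ) {u v : F}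
    (h : ‖u - v‖ ≤ C) : ‖φ u - φ v‖ ≤ K * C := by
  simpa only [dist_eq_norm] using hφ.dist_le_mul_of_le (by rwa [dist_eq_norm])

theorem norm_intervalIntegral_sub_le_of_lipschitz (hf : ∀ r, LipschitzWith K (f r)) {a t : ℝ}
    (hat : a ≤ t) (hx : IntervalIntegrable (fun r => f r (x r)) volume a t)
    (hy : IntervalIntegrable (fun r => f r (y r)) volume a t)
    (hC : ∀ r ∈ Ioc a t, ‖x r - y r‖ ≤ C) :
    ‖(∫ r in a..t, f r (x r)) - ∫ r in a..t, f r (y r)‖ ≤ K * C * (t - a) := by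
  rw [← intervalIntegral.integral_sub hx hy, ← abs_of_nonneg (sub_nonneg.mpr hat)]
  refine intervalIntegral.norm_integral_le_of_norm_le_const fun r hr => ?_
  rw [uIoc_of_le hat] at hr
  exact (hf r).norm_sub_le_mul_of_le (hC r hr)

theorem norm_setIntegral_sub_le_of_lipschitz {α : Type*} [MeasurableSpace α] {f : α → F → E}
    {x y : α → F} (hf : ∀ r, LipschitzWith K (f r)) {μ : Measure α} {s : Set α}
    (hs : μ s < ⊤) (hx : IntegrableOn (fun r => f r (x r)) s μ)
    (hy : IntegrableOn (fun r => f r (y r)) s μ) (hC : ∀ r ∈ s, ‖x r - y r‖ ≤ C) :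
    ‖(∫ r in s, f r (x r) ∂μ) - ∫ r in s, f r (y r) ∂μ‖ ≤ K * C * μ.real s := by
  rw [← integral_sub hx hy]
  refine norm_setIntegral_le_of_norm_le_const hs fun r hr => ?_
  exact (hf r).norm_sub_le_mul_of_le (hC r hr)

end IntegralEstimates

section Picard

variable {E : Type*} [NormedAddCommGroup E] [NormedSpace ℝ E]

/-- The operator `P` of the paper, with `du_c = μ - ν`. -/
noncomputable def stieltjesPicard (x₀ : E) (t₀ : ℝ) (f g : ℝ → E → E) (μ ν : Measure ℝ)
    (y : ℝ → E) (t : ℝ) : E :=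
  x₀ + (∫ r in t₀..t, f r (y r)) +
    ((∫ r in Ioc t₀ t, g r (y r) ∂μ) - ∫ r in Ioc t₀ t, g r (y r) ∂ν)

theorem stieltjesPicard_supLipschitzOn (x₀ : E) {t₀ h : ℝ} {f g : ℝ → E → E} {Kf Kg : NNReal}
    (hf : ∀ t, LipschitzWith Kf (f t)) (hg : ∀ t, LipschitzWith Kg (g t))
    {μ ν : Measure ℝ} [IsFiniteMeasure μ] [IsFiniteMeasure ν]
    (hint : ∀ y : ℝ → E, Continuous y →
      (∀ t ∈ Icc t₀ (t₀ + h), IntervalIntegrable (fun r => f r (y r)) volume t₀ t) ∧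
      IntegrableOn (fun r => g r (y r)) (Ioc t₀ (t₀ + h)) μ ∧
      IntegrableOn (fun r => g r (y r)) (Ioc t₀ (t₀ + h)) ν) :
    SupLipschitzOn (stieltjesPicard x₀ t₀ f g μ ν) (Icc t₀ (t₀ + h))
      (Kf * h + Kg * (μ.real (Ioc t₀ (t₀ + h)) + ν.real (Ioc t₀ (t₀ + h)))) := by
  intro x y hx hy C hC t ht
  obtain ⟨hfx, hgxμ, hgxν⟩ := hint x hx
  obtain ⟨hfy, hgyμ, hgyν⟩ := hint y hy
  have hC₀ : 0 ≤ C := (norm_nonneg _).trans (hC t ht)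
  have hsub : Ioc t₀ t ⊆ Ioc t₀ (t₀ + h) := Ioc_subset_Ioc_right ht.2
  have hC' : ∀ r ∈ Ioc t₀ t, ‖x r - y r‖ ≤ C := fun r hr => hC r (Ioc_subset_Icc_self (hsub hr))
  have hgμ := norm_setIntegral_sub_le_of_lipschitz hg (measure_lt_top μ _)
    (hgxμ.mono_set hsub) (hgyμ.mono_set hsub) hC'
  have hgν := norm_setIntegral_sub_le_of_lipschitz hg (measure_lt_top ν _)
    (hgxν.mono_set hsub) (hgyν.mono_set hsub) hC'
  have hfxy := norm_intervalIntegral_sub_le_of_lipschitz hf ht.1 (hfx t ht) (hfy t ht) hC'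
  have hμ : μ.real (Ioc t₀ t) ≤ μ.real (Ioc t₀ (t₀ + h)) := measureReal_mono hsub
  have hν : ν.real (Ioc t₀ t) ≤ ν.real (Ioc t₀ (t₀ + h)) := measureReal_mono hsub
  calc ‖stieltjesPicard x₀ t₀ f g μ ν x t - stieltjesPicard x₀ t₀ f g μ ν y t‖
      ≤ ‖(∫ r in t₀..t, f r (x r)) - ∫ r in t₀..t, f r (y r)‖ +
          (‖(∫ r in Ioc t₀ t, g r (x r) ∂μ) - ∫ r in Ioc t₀ t, g r (y r) ∂μ‖ +
            ‖(∫ r in Ioc t₀ t, g r (x r) ∂ν) - ∫ r in Ioc t₀ t, g r (y r) ∂ν‖) := by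
        have hsplit : ∀ a b b' c c' d d' : E,
            a + b + (c - d) - (a + b' + (c' - d')) = (b - b') + ((c - c') - (d - d')) :=
          fun _ _ _ _ _ _ _ => by abel
        rw [stieltjesPicard, stieltjesPicard, hsplit]
        exact (norm_add_le _ _).trans (add_le_add_right (norm_sub_le _ _) _)
    _ ≤ Kf * C * (t - t₀) + (Kg * C * μ.real (Ioc t₀ t) + Kg * C * ν.real (Ioc t₀ t)) := by
        gcongr
    _ ≤ Kf * C * h + (Kg * C * μ.real (Ioc t₀ (t₀ + h)) + Kg * C * ν.real (Ioc t₀ (t₀ + h))) := by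
        gcongr
        linarith [ht.2]
    _ = (Kf * h + Kg * (μ.real (Ioc t₀ (t₀ + h)) + ν.real (Ioc t₀ (t₀ + h)))) * C := by ring

end Picard

/-- Contraction estimate underlying local existence (Theorem 3 of the paper):
for `P(x̂)(t) = x₀ + ∫_{t₀}^t f(r, x̂(r)) dr + ∫_{(t₀,t]} g(r, x̂(r)) du_c(r)`,
where the Lebesgue–Stieltjes integral against the continuous BV function `u_c` is
represented as the difference of integrals against two finite measures `μ, ν`
(with total variation `V = μ((t₀,t₀+h]) + ν((t₀,t₀+h])`), one has
`sup |P x̂ - P ŷ| ≤ (K_f h + K_g V) sup |x̂ - ŷ|` on `[t₀, t₀+h]`; hence if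
`K_f h + K_g V < 1` then `P` has a unique fixed point among continuous curves. -/
theorem stmt16 {n : ℕ} (t₀ h : ℝ) (hh : 0 < h)
    (f g : ℝ → (Fin n → ℝ) → (Fin n → ℝ))
    (Kf Kg : NNReal)
    (hf : ∀ t, LipschitzWith Kf (f t))
    (hg : ∀ t, LipschitzWith Kg (g t))
    (μ ν : Measure ℝ) [IsFiniteMeasure μ] [IsFiniteMeasure ν]
    (V : ℝ)
    (hV : (μ (Set.Ioc t₀ (t₀ + h))).toReal + (ν (Set.Ioc t₀ (t₀ + h))).toReal = V)
    (x₀ : Fin n → ℝ)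
    (P : (ℝ → (Fin n → ℝ)) → ℝ → (Fin n → ℝ))
    (hP : ∀ y t, P y t = x₀ + (∫ r in t₀..t, f r (y r)) +
      ((∫ r in Set.Ioc t₀ t, g r (y r) ∂μ) - ∫ r in Set.Ioc t₀ t, g r (y r) ∂ν))
    (hint : ∀ y : ℝ → Fin n → ℝ, Continuous y →
      (∀ t ∈ Set.Icc t₀ (t₀ + h), IntervalIntegrable (fun r => f r (y r)) volume t₀ t) ∧
      IntegrableOn (fun r => g r (y r)) (Set.Ioc t₀ (t₀ + h)) μ ∧
      IntegrableOn (fun r => g r (y r)) (Set.Ioc t₀ (t₀ + h)) ν) :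
    (∀ x y : ℝ → Fin n → ℝ, Continuous x → Continuous y →
      ∀ C : ℝ, (∀ r ∈ Set.Icc t₀ (t₀ + h), ‖x r - y r‖ ≤ C) →
      ∀ t ∈ Set.Icc t₀ (t₀ + h),
        ‖P x t - P y t‖ ≤ ((Kf : ℝ) * h + (Kg : ℝ) * V) * C) ∧
    ((Kf : ℝ) * h + (Kg : ℝ) * V < 1 →
      (∀ y : ℝ → Fin n → ℝ, Continuous y → Continuous (P y)) →
      ∃ x : ℝ → Fin n → ℝ, Continuous x ∧ (∀ t ∈ Set.Icc t₀ (t₀ + h), P x t = x t) ∧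
        ∀ y : ℝ → Fin n → ℝ, Continuous y →
          (∀ t ∈ Set.Icc t₀ (t₀ + h), P y t = y t) →
          ∀ t ∈ Set.Icc t₀ (t₀ + h), y t = x t) := by
  have hP' : P = stieltjesPicard x₀ t₀ f g μ ν := funext fun y => funext (hP y)
  have hlip : SupLipschitzOn P (Icc t₀ (t₀ + h)) ((Kf : ℝ) * h + (Kg : ℝ) * V) := by
    rw [hP', ← hV]
    exact stieltjesPicard_supLipschitzOn x₀ hf hg hint
  have hV₀ : 0 ≤ V := hV ▸ by positivity
  exact ⟨hlip, fun hk hcont =>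
    hlip.exists_unique_fixedPoint (by linarith) (by positivity) hk hcont⟩
end

section
/- If f : (t₀,T) × ℝⁿ → ℝⁿ is continuous, K ⊂ ℝⁿ is closed and convex, and x : [t₀,T) → ℝⁿ is C¹ with x(t₀) ∈ K and f(t, y) ∈ T_K(y) (the tangent cone of the convex set K) whenever y ∈ K, and ẋ(t) = f(t, x(t)), then under a Lipschitz condition on f in x, x(t) ∈ K for all t ∈ [t₀,T). (Nagumo/invariance theorem for convex sets.) -/
/-!
Let `g t = d(x t, K)` and let `y ∈ K` be a point nearest to `x t`. For convex `K`, every vector `v`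
of the closed cone spanned by `K - y` satisfies `d(y + c v, K) = o(c)` as `c → 0⁺`. Comparing `x`
with `y + c f(t, y)` shows that the right Dini derivative of `g` is at most
`‖f(t, x t) - f(t, y)‖ ≤ L g(t)`. As `g(t₀) = 0`, Grönwall's inequality gives `g ≡ 0`.
-/

open Set Pointwise

/-- The tangent cone of a convex set `K` at `y`:
the closure of `⋃_{λ > 0} λ(K - y)`. -/
def convexTangentCone {n : ℕ} (K : Set (EuclideanSpace ℝ (Fin n)))
    (y : EuclideanSpace ℝ (Fin n)) : Set (EuclideanSpace ℝ (Fin n)) :=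
  closure (⋃ lam ∈ Set.Ioi (0:ℝ), lam • ((· - y) '' K))

open Filter Metric Topology

section Nagumo

variable {E : Type*} [NormedAddCommGroup E] [NormedSpace ℝ E]

/-- Bouligand's contingent cone: `liminf_{c → 0⁺} d(y + c v, K) / c = 0`. -/
def contingentCone (K : Set E) (y : E) : Set E :=
  {v | ∀ ε > 0, ∃ᶠ c in 𝓝[>] (0 : ℝ), infDist (y + c • v) K ≤ c * ε}

theorem Convex.mem_contingentCone_of_mem_closure {K : Set E} (hK : Convex ℝ K) {y v : E}
    (hy : y ∈ K) (hv : v ∈ closure (⋃ lam ∈ Ioi (0 : ℝ), lam • ((· - y) '' K))) :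
    v ∈ contingentCone K y := by
  intro ε hε
  obtain ⟨w, hw, hvw⟩ := Metric.mem_closure_iff.1 hv ε hε
  simp only [mem_iUnion, mem_smul_set, mem_image] at hw
  obtain ⟨lam, hlam, _, ⟨z, hz, rfl⟩, rfl⟩ := hw
  have hlam : (0 : ℝ) < lam := hlam
  have hsmall : Ioc (0 : ℝ) lam⁻¹ ∈ 𝓝[>] (0 : ℝ) := Ioc_mem_nhdsGT (inv_pos.2 hlam)
  refine (eventually_of_mem hsmall fun c ⟨hc, hc'⟩ => ?_).frequently
  have hcl : c * lam ≤ 1 := by rwa [← le_div_iff₀ hlam, div_eq_inv_mul, mul_one]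
  -- `y + c λ (z - y)` is a convex combination of `y` and `z`
  have hmem : y + c • lam • (z - y) ∈ K := by
    convert hK hy hz (sub_nonneg.2 hcl) (mul_pos hc hlam).le (sub_add_cancel _ _) using 1
    module
  calc infDist (y + c • v) K ≤ dist (y + c • v) (y + c • lam • (z - y)) :=
        infDist_le_dist_of_mem hmem
    _ = c * dist v (lam • (z - y)) := by
        rw [dist_add_left, dist_smul₀, Real.norm_of_nonneg hc.le]
    _ ≤ c * ε := by gcongr

theorem frequently_infDist_lt_of_hasDerivWithinAt {K : Set E} {x : ℝ → E} {v y w : E}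
    {s r : ℝ} (hx : HasDerivWithinAt x v (Ioi s) s) (hw : w ∈ contingentCone K y)
    (hr : ‖v - w‖ < r) :
    ∃ᶠ u in 𝓝[>] s, infDist (x u) K < dist (x s) y + (u - s) * r := by
  set ε := (r - ‖v - w‖) / 3 with hε_def
  have hε : 0 < ε := div_pos (sub_pos.2 hr) three_pos
  have hshift : Tendsto (s + ·) (𝓝[>] 0) (𝓝[>] s) := by
    rw [Tendsto, map_add_left_nhdsGT, add_zero]
  have hlin : ∀ᶠ c in 𝓝[>] (0 : ℝ), ‖x (s + c) - x s - c • v‖ ≤ ε * c := by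
    filter_upwards [hshift.eventually ((hasDerivWithinAt_iff_isLittleO.1 hx).def hε),
      self_mem_nhdsWithin] with c hc (hc0 : 0 < c)
    simpa [abs_of_pos hc0] using hc
  refine hshift.frequently (((hw ε hε).and_eventually (hlin.and self_mem_nhdsWithin)).mono ?_)
  rintro c ⟨hcone, hlin, hc : 0 < c⟩
  have hsplit : x (s + c) - (y + c • w) =
      (x (s + c) - x s - c • v) + (x s - y) + c • (v - w) := by
    module
  have hdist : dist (x (s + c)) (y + c • w) ≤ ε * c + dist (x s) y + c * ‖v - w‖ := by
    rw [dist_eq_norm, hsplit, dist_eq_norm]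
    refine (norm_add₃_le).trans ?_
    rw [norm_smul, Real.norm_of_nonneg hc.le]
    gcongr
  calc infDist (x (s + c)) K ≤ infDist (y + c • w) K + dist (x (s + c)) (y + c • w) :=
        infDist_le_infDist_add_dist
    _ ≤ c * ε + (ε * c + dist (x s) y + c * ‖v - w‖) := add_le_add hcone hdist
    _ < dist (x s) y + (s + c - s) * r := by
        rw [add_sub_cancel_left]
        nlinarith [mul_pos hc hε]

theorem frequently_slope_infDist_lt [ProperSpace E] {K : Set E} (hK : IsClosed K)
    (hne : K.Nonempty) {F : E → E} {L : NNReal} (hF : LipschitzWith L F)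
    (htan : ∀ y ∈ K, F y ∈ contingentCone K y) {x : ℝ → E} {s r : ℝ}
    (hx : HasDerivWithinAt x (F (x s)) (Ioi s) s) (hr : L * infDist (x s) K < r) :
    ∃ᶠ u in 𝓝[>] s, (u - s)⁻¹ * (infDist (x u) K - infDist (x s) K) < r := by
  obtain ⟨y, hy, hxy⟩ := hK.exists_infDist_eq_dist hne (x s)
  have hdir : ‖F (x s) - F y‖ < r := by
    rw [← dist_eq_norm]
    exact (hF.dist_le_mul _ _).trans_lt (hxy ▸ hr)
  refine ((frequently_infDist_lt_of_hasDerivWithinAt hx (htan y hy) hdir).and_eventually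
    self_mem_nhdsWithin).mono fun u ⟨hu, hsu⟩ => ?_
  rw [inv_mul_lt_iff₀ (sub_pos.2 hsu)]
  linarith

theorem IsClosed.mapsTo_of_hasDerivWithinAt_mem_contingentCone [ProperSpace E] {K : Set E}
    (hK : IsClosed K) {f : ℝ → E → E} {L : NNReal} {a b : ℝ}
    (hL : ∀ t ∈ Ico a b, LipschitzWith L (f t))
    (htan : ∀ t ∈ Ico a b, ∀ y ∈ K, f t y ∈ contingentCone K y) {x : ℝ → E}
    (hxc : ContinuousOn x (Icc a b))
    (hx : ∀ t ∈ Ico a b, HasDerivWithinAt x (f t (x t)) (Ioi t) t) (ha : x a ∈ K) :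
    MapsTo x (Icc a b) K := by
  have hne : K.Nonempty := ⟨x a, ha⟩
  intro t ht
  have hdist := le_gronwallBound_of_liminf_deriv_right_le (δ := 0) (ε := 0)
    ((continuous_infDist_pt K).comp_continuousOn hxc)
    (fun s hs _ hr => frequently_slope_infDist_lt hK hne (hL s hs) (htan s hs) (hx s hs) hr)
    (infDist_zero_of_mem ha).le (fun _ _ => (add_zero _).ge) t ht
  rw [gronwallBound_ε0_δ0] at hdist
  exact (hK.mem_iff_infDist_zero hne).2 (hdist.antisymm infDist_nonneg)

end Nagumo

theorem stmt18_general {n : ℕ} (t₀ T : ℝ)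
    (f : ℝ → EuclideanSpace ℝ (Fin n) → EuclideanSpace ℝ (Fin n))
    (L : NNReal) (hL : ∀ t, LipschitzWith L (f t))
    (K : Set (EuclideanSpace ℝ (Fin n))) (hKc : IsClosed K) (hKconv : Convex ℝ K)
    (htan : ∀ t ∈ Set.Ico t₀ T, ∀ y ∈ K, f t y ∈ convexTangentCone K y)
    (x : ℝ → EuclideanSpace ℝ (Fin n))
    (hx : ∀ t ∈ Set.Ico t₀ T, HasDerivAt x (f t (x t)) t)
    (hx0 : x t₀ ∈ K) :
    ∀ t ∈ Set.Ico t₀ T, x t ∈ K := by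
  intro t ht
  have hsub : Icc t₀ t ⊆ Ico t₀ T := Icc_subset_Ico_right ht.2
  refine hKc.mapsTo_of_hasDerivWithinAt_mem_contingentCone (fun s _ => hL s)
    (fun s hs y hy => hKconv.mem_contingentCone_of_mem_closure hy
      (htan s (hsub (Ico_subset_Icc_self hs)) y hy))
    (fun s hs => (hx s (hsub hs)).continuousAt.continuousWithinAt)
    (fun s hs => (hx s (hsub (Ico_subset_Icc_self hs))).hasDerivWithinAt) hx0 ⟨ht.1, le_rfl⟩

/-- Nagumo/invariance theorem for convex sets: if `f` is continuous, Lipschitz in `x`,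
`K` is closed and convex, `f(t,y) ∈ T_K(y)` for `y ∈ K`, and `x` is a `C¹` solution of
`ẋ = f(t,x)` on `[t₀,T)` with `x(t₀) ∈ K`, then `x(t) ∈ K` for all `t ∈ [t₀,T)`. -/
theorem stmt18 {n : ℕ} (t₀ T : ℝ)
    (f : ℝ → EuclideanSpace ℝ (Fin n) → EuclideanSpace ℝ (Fin n))
    (hf : Continuous fun p : ℝ × EuclideanSpace ℝ (Fin n) => f p.1 p.2)
    (L : NNReal) (hL : ∀ t, LipschitzWith L (f t))
    (K : Set (EuclideanSpace ℝ (Fin n))) (hKc : IsClosed K) (hKconv : Convex ℝ K)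
    (htan : ∀ t ∈ Set.Ico t₀ T, ∀ y ∈ K, f t y ∈ convexTangentCone K y)
    (x : ℝ → EuclideanSpace ℝ (Fin n))
    (hx : ∀ t ∈ Set.Ico t₀ T, HasDerivAt x (f t (x t)) t)
    (hx0 : x t₀ ∈ K) :
    ∀ t ∈ Set.Ico t₀ T, x t ∈ K :=
  stmt18_general t₀ T f L hL K hKc hKconv htan x hx hx0
end
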